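/- If a₀₃ = (-7 - 4a₀₂)/2, then the quartic polynomial kernel S_4 has approximation order 2: Σ_{i∈ℤ} S_4(t - i) = 1 and Σ_{i∈ℤ} (t - i)S_4(t - i) = 0 for all real t, for every value of the free parameter a₀₂. -/

import Mathlib

noncomputable def S4 (a2 a3 t : ℝ) : ℝ :=
  if |t| < 1 then
    (1 - |t|) * (1 + |t| + (1 + a2) * |t| ^ 2 + (1 + a2 + a3) * |t| ^ 3)
  else if |t| < 2 then
    (1 - |t|) * (2 - |t|) ^ 2 * (5 + 3 * a2 + 2 * a3 - (1 + a2 + a3) * |t|)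
  else 0

/-! Since `S4` vanishes outside `(-2, 2)`, both series over `ℤ` reduce to the four shifts
`s + 1, s, s - 1, s - 2` of the fractional part `s` of `t`. On `[0, 1]` these four points fall
into fixed polynomial pieces of `S4` (the pieces agree at `|t| = 1` and vanish at `|t| = 2`),
so each sum is a polynomial in `s`; under `a3 = (-7 - 4 a2) / 2` the two polynomials are the
constants `1` and `0`. -/

theorem tsum_int_sub_eq_of_abs_ge_two {f : ℝ → ℝ} (hf : ∀ x, 2 ≤ |x| → f x = 0) (t : ℝ) :
    ∑' i : ℤ, f (t - i) =
      f (Int.fract t + 1) + f (Int.fract t) + f (Int.fract t - 1) + f (Int.fract t - 2) := by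
  have hsupp : ∀ i ∉ ({⌊t⌋ - 1, ⌊t⌋, ⌊t⌋ + 1, ⌊t⌋ + 2} : Finset ℤ), f (t - i) = 0 := by
    intro i hi
    simp only [Finset.mem_insert, Finset.mem_singleton, not_or] at hi
    have hfloor : (⌊t⌋ : ℝ) ≤ t ∧ t < ⌊t⌋ + 1 := ⟨Int.floor_le t, Int.lt_floor_add_one t⟩
    apply hf
    rcases (by omega : i + 2 ≤ ⌊t⌋ ∨ ⌊t⌋ + 3 ≤ i) with h | h
    · have : (i : ℝ) + 2 ≤ ⌊t⌋ := by exact_mod_cast h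
      rw [le_abs]; left; linarith
    · have : (⌊t⌋ : ℝ) + 3 ≤ i := by exact_mod_cast h
      rw [le_abs]; right; linarith
  rw [tsum_eq_sum hsupp, Finset.sum_insert (by simp; omega), Finset.sum_insert (by simp),
    Finset.sum_insert (by simp), Finset.sum_singleton, Int.fract]
  push_cast
  ring_nf

section Pieces

variable (a2 a3 : ℝ)

def S4Inner (u : ℝ) : ℝ :=
  (1 - u) * (1 + u + (1 + a2) * u ^ 2 + (1 + a2 + a3) * u ^ 3)

def S4Outer (u : ℝ) : ℝ :=
  (1 - u) * (2 - u) ^ 2 * (5 + 3 * a2 + 2 * a3 - (1 + a2 + a3) * u)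

theorem S4_of_abs_le_one {t : ℝ} (ht : |t| ≤ 1) : S4 a2 a3 t = S4Inner a2 a3 |t| := by
  rcases ht.lt_or_eq with ht | ht
  · simp only [S4, if_pos ht, S4Inner]
  · simp [S4, S4Inner, ht]

theorem S4_of_one_le_abs {t : ℝ} (h1 : 1 ≤ |t|) (h2 : |t| ≤ 2) :
    S4 a2 a3 t = S4Outer a2 a3 |t| := by
  rw [S4, if_neg h1.not_gt]
  rcases h2.lt_or_eq with h2 | h2
  · simp only [if_pos h2, S4Outer]
  · simp [S4Outer, h2]

theorem S4_of_two_le_abs {t : ℝ} (ht : 2 ≤ |t|) : S4 a2 a3 t = 0 := by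
  rw [S4, if_neg (by linarith), if_neg ht.not_gt]

theorem S4_shifts_of_mem_Icc {s : ℝ} (hs : s ∈ Set.Icc (0 : ℝ) 1) :
    S4 a2 a3 (s + 1) = S4Outer a2 a3 (s + 1) ∧ S4 a2 a3 s = S4Inner a2 a3 s ∧
      S4 a2 a3 (s - 1) = S4Inner a2 a3 (1 - s) ∧ S4 a2 a3 (s - 2) = S4Outer a2 a3 (2 - s) := by
  obtain ⟨h0, h1⟩ := hs
  have habs₁ : |s + 1| = s + 1 := abs_of_nonneg (by linarith)
  have habs₂ : |s - 1| = 1 - s := by rw [abs_of_nonpos (by linarith)]; ring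
  have habs₃ : |s - 2| = 2 - s := by rw [abs_of_nonpos (by linarith)]; ring
  refine ⟨?_, ?_, ?_, ?_⟩
  · rw [S4_of_one_le_abs _ _ (by linarith) (by linarith), habs₁]
  · rw [S4_of_abs_le_one _ _ (by rwa [abs_of_nonneg h0]), abs_of_nonneg h0]
  · rw [S4_of_abs_le_one _ _ (by linarith), habs₂]
  · rw [S4_of_one_le_abs _ _ (by linarith) (by linarith), habs₃]

end Pieces

section ApproxOrder

variable {a2 a3 : ℝ}

theorem S4_sum_shifts (ha3 : a3 = (-7 - 4 * a2) / 2) {s : ℝ} (hs : s ∈ Set.Icc (0 : ℝ) 1) :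
    S4 a2 a3 (s + 1) + S4 a2 a3 s + S4 a2 a3 (s - 1) + S4 a2 a3 (s - 2) = 1 := by
  obtain ⟨e₁, e₂, e₃, e₄⟩ := S4_shifts_of_mem_Icc a2 a3 hs
  rw [e₁, e₂, e₃, e₄, S4Inner, S4Inner, S4Outer, S4Outer, ha3]
  ring

theorem S4_moment_sum_shifts (ha3 : a3 = (-7 - 4 * a2) / 2) {s : ℝ}
    (hs : s ∈ Set.Icc (0 : ℝ) 1) :
    (s + 1) * S4 a2 a3 (s + 1) + s * S4 a2 a3 s + (s - 1) * S4 a2 a3 (s - 1)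
      + (s - 2) * S4 a2 a3 (s - 2) = 0 := by
  obtain ⟨e₁, e₂, e₃, e₄⟩ := S4_shifts_of_mem_Icc a2 a3 hs
  rw [e₁, e₂, e₃, e₄, S4Inner, S4Inner, S4Outer, S4Outer, ha3]
  ring

end ApproxOrder

theorem S4_approx_order_two (a2 a3 : ℝ) (ha3 : a3 = (-7 - 4 * a2) / 2) :
    (∀ t : ℝ, ∑' i : ℤ, S4 a2 a3 (t - i) = 1) ∧
    (∀ t : ℝ, ∑' i : ℤ, (t - i) * S4 a2 a3 (t - i) = 0) := by
  have hfract (t : ℝ) : Int.fract t ∈ Set.Icc (0 : ℝ) 1 :=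
    ⟨Int.fract_nonneg t, (Int.fract_lt_one t).le⟩
  refine ⟨fun t => ?_, fun t => ?_⟩
  · rw [tsum_int_sub_eq_of_abs_ge_two (fun x hx => S4_of_two_le_abs a2 a3 hx)]
    exact S4_sum_shifts ha3 (hfract t)
  · exact (tsum_int_sub_eq_of_abs_ge_two (f := fun x => x * S4 a2 a3 x)
      (fun x hx => by rw [S4_of_two_le_abs a2 a3 hx, mul_zero]) t).trans
      (S4_moment_sum_shifts ha3 (hfract t))
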